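/- With notation as in the projective change computation: the Patterson--Walker metrics $g = 2\,dx^A\odot dp_A - 2\Gamma_A{}^C{}_B p_C\,dx^A\odot dx^B$ and $\hat g = 2\,dx^A\odot d\hat p_A - 2\widehat\Gamma_A{}^C{}_B \hat p_C\,dx^A\odot dx^B$, where $\hat p_A = e^{w\phi}p_A$, $\widehat\Gamma_A{}^C{}_B = \Gamma_A{}^C{}_B + \delta_A^C\Upsilon_B + \delta_B^C\Upsilon_A$ and $\Upsilon_A = \partial\phi/\partial x^A$, satisfy $\hat g = e^{w\phi}\big(g + 2(w-2)\,p_B\,\Upsilon_A\,dx^B\odot dx^A\big)$. Consequently, $\hat g$ is conformally equivalent to $g$ for all choices of $\phi$ if and only if $w = 2$. -/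

import Mathlib

/-- The Patterson--Walker metric `g = 2 dx^A ⊙ dp_A - 2 Γ_A{}^C{}_B(x) p_C dx^A ⊙ dx^B`. -/
def PWg (n : ℕ) (Γ : (Fin n → ℝ) → Fin n → Fin n → Fin n → ℝ)
    (z u v : (Fin n → ℝ) × (Fin n → ℝ)) : ℝ :=
  (∑ A, (u.1 A * v.2 A + u.2 A * v.1 A)) -
    ∑ A, ∑ B, (∑ C, Γ z.1 A C B * z.2 C) * (u.1 A * v.1 B + u.1 B * v.1 A)

/-- The coframe component `d p̂_A` where `p̂_A = e^{wφ(x)} p_A`, evaluated on a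
tangent vector `u` at `z`. -/
noncomputable def dphat (n : ℕ) (w : ℝ) (φ : (Fin n → ℝ) → ℝ) (A : Fin n)
    (z u : (Fin n → ℝ) × (Fin n → ℝ)) : ℝ :=
  fderiv ℝ (fun y : (Fin n → ℝ) × (Fin n → ℝ) => Real.exp (w * φ y.1) * y.2 A) z u

/-- The Patterson--Walker metric of the projectively changed connection
`Γ̂_A{}^C{}_B = Γ_A{}^C{}_B + δ_A^C Υ_B + δ_B^C Υ_A` (with `Υ = dφ`), written in
the original coordinates using `p̂_A = e^{wφ} p_A`:
`ĝ = 2 dx^A ⊙ dp̂_A - 2 Γ̂_A{}^C{}_B p̂_C dx^A ⊙ dx^B`. -/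
noncomputable def PWghat (n : ℕ) (w : ℝ) (Γ : (Fin n → ℝ) → Fin n → Fin n → Fin n → ℝ)
    (φ : (Fin n → ℝ) → ℝ) (z u v : (Fin n → ℝ) × (Fin n → ℝ)) : ℝ :=
  (∑ A, (u.1 A * dphat n w φ A z v + dphat n w φ A z u * v.1 A)) -
    ∑ A, ∑ B, (∑ C, (Γ z.1 A C B +
        (if A = C then fderiv ℝ φ z.1 (Pi.single B 1) else 0) +
        (if B = C then fderiv ℝ φ z.1 (Pi.single A 1) else 0)) *
        (Real.exp (w * φ z.1) * z.2 C)) * (u.1 A * v.1 B + u.1 B * v.1 A)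

lemma dphat_eq (n : ℕ) (w : ℝ) (φ : (Fin n → ℝ) → ℝ) (hφ : ContDiff ℝ (⊤ : ℕ∞) φ)
    (A : Fin n) (z u : (Fin n → ℝ) × (Fin n → ℝ)) :
    dphat n w φ A z u =
      Real.exp (w * φ z.1) * (w * (fderiv ℝ φ z.1 u.1) * z.2 A + u.2 A) := by
  have h1 : HasFDerivAt (fun y : (Fin n → ℝ) × (Fin n → ℝ) => w * φ y.1)
      (w • ((fderiv ℝ φ z.1).comp (ContinuousLinearMap.fst ℝ (Fin n → ℝ) (Fin n → ℝ)))) z :=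
    ((((hφ.differentiable (by simp)) z.1).hasFDerivAt).comp z (hasFDerivAt_fst)).const_mul w
  have h2 := h1.exp
  have h3 : HasFDerivAt (fun y : (Fin n → ℝ) × (Fin n → ℝ) => y.2 A)
      ((ContinuousLinearMap.proj A).comp (ContinuousLinearMap.snd ℝ (Fin n → ℝ) (Fin n → ℝ))) z :=
    ((ContinuousLinearMap.proj A).comp (ContinuousLinearMap.snd ℝ (Fin n → ℝ) (Fin n → ℝ))).hasFDerivAt
  have h4 : HasFDerivAt (fun y : (Fin n → ℝ) × (Fin n → ℝ) => Real.exp (w * φ y.1) * y.2 A) _ z :=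
    h2.mul h3
  rw [dphat, h4.fderiv]
  simp
  ring

lemma fderiv_lin (n : ℕ) (φ : (Fin n → ℝ) → ℝ) (x : Fin n → ℝ) (y : Fin n → ℝ) :
    fderiv ℝ φ x y = ∑ B, y B * fderiv ℝ φ x (Pi.single B 1) := by
  have hy : y = ∑ B, y B • (Pi.single B (1:ℝ) : Fin n → ℝ) := by
    ext j; simp [Pi.single_apply]
  conv_lhs => rw [hy]
  rw [map_sum]
  simp [smul_eq_mul]


lemma part1 (n : ℕ) (w : ℝ) (Γ : (Fin n → ℝ) → Fin n → Fin n → Fin n → ℝ)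
    (φ : (Fin n → ℝ) → ℝ) (hφ : ContDiff ℝ (⊤ : ℕ∞) φ)
    (z u v : (Fin n → ℝ) × (Fin n → ℝ)) :
    PWghat n w Γ φ z u v = Real.exp (w * φ z.1) *
      (PWg n Γ z u v + (w - 2) *
        ∑ A, ∑ B, z.2 B * fderiv ℝ φ z.1 (Pi.single A 1) *
          (u.1 B * v.1 A + u.1 A * v.1 B)) := by
  set e := Real.exp (w * φ z.1) with he
  set Up : Fin n → ℝ := fun A => fderiv ℝ φ z.1 (Pi.single A 1) with hUp
  have hUp' : ∀ A, fderiv ℝ φ z.1 (Pi.single A 1) = Up A := fun A => rfl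
  rw [PWghat, PWg]
  have hu : fderiv ℝ φ z.1 u.1 = ∑ B, u.1 B * Up B := fderiv_lin n φ z.1 u.1
  have hv : fderiv ℝ φ z.1 v.1 = ∑ B, v.1 B * Up B := fderiv_lin n φ z.1 v.1
  simp only [dphat_eq n w φ hφ, hu, hv, hUp', ← he]
  have hfirst : (∑ A, (u.1 A * (e * ((w * ∑ B, v.1 B * Up B) * z.2 A + v.2 A)) +
        e * ((w * ∑ B, u.1 B * Up B) * z.2 A + u.2 A) * v.1 A))
      = e * (∑ A, (u.1 A * v.2 A + u.2 A * v.1 A)) +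
        e * w * ∑ A, ∑ B, Up B * z.2 A * (u.1 A * v.1 B + u.1 B * v.1 A) := by
    conv_rhs => rw [Finset.mul_sum, Finset.mul_sum]
    rw [← Finset.sum_add_distrib]
    refine Finset.sum_congr rfl fun A _ => ?_
    have h1 : ∑ B, Up B * z.2 A * (u.1 A * v.1 B + u.1 B * v.1 A)
        = z.2 A * u.1 A * (∑ B, v.1 B * Up B) + z.2 A * v.1 A * (∑ B, u.1 B * Up B) := by
      rw [Finset.mul_sum, Finset.mul_sum, ← Finset.sum_add_distrib]
      exact Finset.sum_congr rfl fun B _ => by ring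
    rw [h1]; ring
  have hif : ∀ A B : Fin n,
      (∑ C, ((Γ z.1 A C B + if A = C then Up B else 0) + if B = C then Up A else 0) * (e * z.2 C))
      = e * (∑ C, Γ z.1 A C B * z.2 C) + (e * (Up B * z.2 A) + e * (Up A * z.2 B)) := by
    intro A B
    have : ∀ C : Fin n,
        ((Γ z.1 A C B + if A = C then Up B else 0) + if B = C then Up A else 0) * (e * z.2 C)
        = e * (Γ z.1 A C B * z.2 C) + ((if A = C then Up B * (e * z.2 C) else 0)
            + (if B = C then Up A * (e * z.2 C) else 0)) := by
      intro C
      by_cases h1 : A = C <;> by_cases h2 : B = C <;> simp [h1, h2] <;> ring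
    simp only [this, Finset.sum_add_distrib, ← Finset.mul_sum,
      Finset.sum_ite_eq, Finset.mem_univ, if_true]
    ring
  have hsecond : (∑ A, ∑ B,
        (∑ C, ((Γ z.1 A C B + if A = C then Up B else 0) + if B = C then Up A else 0) *
          (e * z.2 C)) * (u.1 A * v.1 B + u.1 B * v.1 A))
      = e * (∑ A, ∑ B, (∑ C, Γ z.1 A C B * z.2 C) * (u.1 A * v.1 B + u.1 B * v.1 A)) +
        (e * ∑ A, ∑ B, Up B * z.2 A * (u.1 A * v.1 B + u.1 B * v.1 A) +
         e * ∑ A, ∑ B, Up A * z.2 B * (u.1 A * v.1 B + u.1 B * v.1 A)) := by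
    simp only [Finset.mul_sum, ← Finset.sum_add_distrib]
    refine Finset.sum_congr rfl fun A _ => Finset.sum_congr rfl fun B _ => ?_
    rw [hif A B]; ring
  have hswap : (∑ A, ∑ B, Up A * z.2 B * (u.1 A * v.1 B + u.1 B * v.1 A))
      = ∑ A, ∑ B, Up B * z.2 A * (u.1 A * v.1 B + u.1 B * v.1 A) := by
    rw [Finset.sum_comm]
    exact Finset.sum_congr rfl fun A _ => Finset.sum_congr rfl fun B _ => by ring
  have hT' : (∑ A, ∑ B, z.2 B * Up A * (u.1 B * v.1 A + u.1 A * v.1 B))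
      = ∑ A, ∑ B, Up B * z.2 A * (u.1 A * v.1 B + u.1 B * v.1 A) := by
    rw [← hswap]
    exact Finset.sum_congr rfl fun A _ => Finset.sum_congr rfl fun B _ => by ring
  rw [hfirst, hsecond, hT', hswap]
  ring

/-- `ĝ = e^{wφ} (g + 2(w-2) p_B Υ_A dx^B ⊙ dx^A)`; consequently `ĝ` is
conformally equivalent to `g` for all choices of `φ` if and only if `w = 2`. -/
theorem stmt_9 (n : ℕ) (hn : 0 < n) (w : ℝ)
    (Γ : (Fin n → ℝ) → Fin n → Fin n → Fin n → ℝ)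
    (hΓ : ContDiff ℝ (⊤ : ℕ∞) Γ) (hsym : ∀ x A C B, Γ x A C B = Γ x B C A) :
    (∀ φ : (Fin n → ℝ) → ℝ, ContDiff ℝ (⊤ : ℕ∞) φ →
      ∀ z u v : (Fin n → ℝ) × (Fin n → ℝ),
        PWghat n w Γ φ z u v = Real.exp (w * φ z.1) *
          (PWg n Γ z u v + (w - 2) *
            ∑ A, ∑ B, z.2 B * fderiv ℝ φ z.1 (Pi.single A 1) *
              (u.1 B * v.1 A + u.1 A * v.1 B))) ∧
    ((∀ φ : (Fin n → ℝ) → ℝ, ContDiff ℝ (⊤ : ℕ∞) φ →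
      ∃ f : ((Fin n → ℝ) × (Fin n → ℝ)) → ℝ,
        ∀ z u v : (Fin n → ℝ) × (Fin n → ℝ),
          PWghat n w Γ φ z u v = Real.exp (2 * f z) * PWg n Γ z u v) ↔ w = 2) := by
  refine ⟨fun φ hφ => part1 n w Γ φ hφ, ?_, ?_⟩
  · -- forward direction
    intro h
    set i0 : Fin n := ⟨0, hn⟩ with hi0
    set φ : (Fin n → ℝ) → ℝ := fun x => x i0 with hφdef
    have hφ : ContDiff ℝ (⊤ : ℕ∞) φ :=
      (ContinuousLinearMap.proj i0 : ((Fin n → ℝ) →L[ℝ] ℝ)).contDiff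
    obtain ⟨f, hf⟩ := h φ hφ
    have hfd : ∀ x : Fin n → ℝ, fderiv ℝ φ x =
        (ContinuousLinearMap.proj i0 : ((Fin n → ℝ) →L[ℝ] ℝ)) := fun x =>
      (ContinuousLinearMap.proj i0 : ((Fin n → ℝ) →L[ℝ] ℝ)).fderiv
    set z : (Fin n → ℝ) × (Fin n → ℝ) := (0, Pi.single i0 1) with hz
    set u1 : (Fin n → ℝ) × (Fin n → ℝ) := (Pi.single i0 1, 0) with hu1
    set v1 : (Fin n → ℝ) × (Fin n → ℝ) := (0, Pi.single i0 1) with hv1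
    have hφ0 : φ z.1 = 0 := by simp [hφdef, hz, hv1]
    have hkey := part1 n w Γ φ hφ
    -- first: determine exp(2 f z) = 1
    have hPW1 : PWg n Γ z u1 v1 = 1 := by
      simp [PWg, hz, hu1, hv1, Pi.single_apply]
    have hS1 : (∑ A, ∑ B, z.2 B * fderiv ℝ φ z.1 (Pi.single A 1) *
        (u1.1 B * v1.1 A + u1.1 A * v1.1 B)) = 0 := by
      simp [hv1]
    have e1 : Real.exp (2 * f z) = 1 := by
      have := hf z u1 v1
      rw [hkey z u1 v1, hφ0, hPW1, hS1] at this
      simpa using this.symm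
    -- second: evaluate on (u1, u1)
    have hS2 : (∑ A, ∑ B, z.2 B * fderiv ℝ φ z.1 (Pi.single A 1) *
        (u1.1 B * u1.1 A + u1.1 A * u1.1 B)) = 2 := by
      simp [hz, hu1, hfd, Pi.single_apply]
      norm_num [hv1, Pi.single_apply]
    have e2 := hf z u1 u1
    rw [hkey z u1 u1, hφ0, hS2, e1] at e2
    simp at e2
    -- e2 : PWg + (w-2)*2 = PWg
    linarith [e2]
  · -- backward direction
    intro hw φ hφ
    refine ⟨fun z => φ z.1, fun z u v => ?_⟩
    rw [part1 n w Γ φ hφ, hw]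
    ring
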